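/- arXiv:1706.04590 — 5 statements merged into one kernel-verified Lean document; each statement's English description precedes it below -/
import Mathlib

section
/- Let a, b, c be real numbers with a + b > 0 and y := (a+b)² − 4c² > 0. Define ω₊ = √((a + b + √y)/(2√y)), ω₋ = √((a + b − √y)/(2√y)), the 2×2 matrix S₀ = [[ω₊, ω₋],[ω₋, ω₊]], σ_Z = diag(1,−1), and the 4×4 block-diagonal matrix S = diag(S₀, σ_Z S₀ σ_Z). Then S is symplectic: S Ω Sᵀ = Ω, where Ω = [[0₂, I₂],[−I₂, 0₂]] is the 4×4 symplectic form. -/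
set_option maxHeartbeats 1000000


open Matrix Real

/-- The matrix `S = diag(S₀, σ_Z S₀ σ_Z)` built from
`ω₊ = √((a+b+√y)/(2√y))` and `ω₋ = √((a+b−√y)/(2√y))`, with `y = (a+b)² − 4c² > 0`,
is symplectic: `S Ω Sᵀ = Ω`, where `Ω = [[0, I],[−I, 0]]`. -/
theorem standard_form_S_is_symplectic (a b c : ℝ) (hab : a + b > 0)
    (hy : (a + b) ^ 2 - 4 * c ^ 2 > 0) :
    let y : ℝ := (a + b) ^ 2 - 4 * c ^ 2
    let ωp : ℝ := Real.sqrt ((a + b + Real.sqrt y) / (2 * Real.sqrt y))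
    let ωm : ℝ := Real.sqrt ((a + b - Real.sqrt y) / (2 * Real.sqrt y))
    let S₀ : Matrix (Fin 2) (Fin 2) ℝ := !![ωp, ωm; ωm, ωp]
    let σZ : Matrix (Fin 2) (Fin 2) ℝ := !![1, 0; 0, -1]
    let S : Matrix (Fin 2 ⊕ Fin 2) (Fin 2 ⊕ Fin 2) ℝ :=
      Matrix.fromBlocks S₀ 0 0 (σZ * S₀ * σZ)
    let Ω : Matrix (Fin 2 ⊕ Fin 2) (Fin 2 ⊕ Fin 2) ℝ :=
      Matrix.fromBlocks 0 1 (-1) 0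
    S * Ω * Sᵀ = Ω := by
  intro y ωp ωm S₀ σZ S Ω
  have hsy : Real.sqrt y > 0 := Real.sqrt_pos.mpr hy
  have hle : Real.sqrt y ≤ a + b := by
    calc Real.sqrt y ≤ Real.sqrt ((a + b) ^ 2) := by
          apply Real.sqrt_le_sqrt; nlinarith [sq_nonneg c, show y = (a+b)^2-4*c^2 from rfl]
      _ = a + b := by rw [Real.sqrt_sq hab.le]
  have hp : ωp ^ 2 = (a + b + Real.sqrt y) / (2 * Real.sqrt y) :=
    Real.sq_sqrt (by positivity)
  have hm : ωm ^ 2 = (a + b - Real.sqrt y) / (2 * Real.sqrt y) := by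
    apply Real.sq_sqrt
    apply div_nonneg (by linarith) (by positivity)
  have key : ωp ^ 2 - ωm ^ 2 = 1 := by
    rw [hp, hm]
    field_simp
    ring
  ext i j
  rcases i with i | i <;> rcases j with j | j <;> fin_cases i <;> fin_cases j <;>
    simp [S, Ω, S₀, σZ, Matrix.mul_apply, Fin.sum_univ_succ, Matrix.fromBlocks,
      Matrix.one_apply] <;>
    nlinarith [key]
end

section
/- Let a, b, c be real numbers with a + b > 0, c ≥ 0, and y := (a+b)² − 4c² > 0. Define ω₊ = √((a + b + √y)/(2√y)), ω₋ = √((a + b − √y)/(2√y)), S₀ = [[ω₊, ω₋],[ω₋, ω₊]], σ_Z = diag(1,−1), S = diag(S₀, σ_Z S₀ σ_Z), ν₋ = (√y − (b−a))/2, ν₊ = (√y + (b−a))/2, and D = diag(ν₋, ν₊). Then S (D ⊕ D) Sᵀ = V, where V is the 4×4 block-diagonal 'standard form' covariance matrix diag([[a, c],[c, b]], [[a, −c],[−c, b]]). -/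
open Matrix Real

/-- Symplectic (Williamson) diagonalization of a two-mode Gaussian
covariance matrix in standard form: `S (D ⊕ D) Sᵀ = V`, where
`V = diag([[a,c],[c,b]], [[a,−c],[−c,b]])`, `D = diag(ν₋, ν₊)` with symplectic
eigenvalues `ν∓ = (√y ∓ (b−a))/2`, and `S = diag(S₀, σ_Z S₀ σ_Z)`. -/
theorem standard_form_williamson_diagonalization (a b c : ℝ) (hab : a + b > 0)
    (hc : c ≥ 0) (hy : (a + b) ^ 2 - 4 * c ^ 2 > 0) :
    let y : ℝ := (a + b) ^ 2 - 4 * c ^ 2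
    let ωp : ℝ := Real.sqrt ((a + b + Real.sqrt y) / (2 * Real.sqrt y))
    let ωm : ℝ := Real.sqrt ((a + b - Real.sqrt y) / (2 * Real.sqrt y))
    let S₀ : Matrix (Fin 2) (Fin 2) ℝ := !![ωp, ωm; ωm, ωp]
    let σZ : Matrix (Fin 2) (Fin 2) ℝ := !![1, 0; 0, -1]
    let S : Matrix (Fin 2 ⊕ Fin 2) (Fin 2 ⊕ Fin 2) ℝ :=
      Matrix.fromBlocks S₀ 0 0 (σZ * S₀ * σZ)
    let νm : ℝ := (Real.sqrt y - (b - a)) / 2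
    let νp : ℝ := (Real.sqrt y + (b - a)) / 2
    let D : Matrix (Fin 2) (Fin 2) ℝ := !![νm, 0; 0, νp]
    let V : Matrix (Fin 2 ⊕ Fin 2) (Fin 2 ⊕ Fin 2) ℝ :=
      Matrix.fromBlocks !![a, c; c, b] 0 0 !![a, -c; -c, b]
    S * Matrix.fromBlocks D 0 0 D * Sᵀ = V := by
  intro y ωp ωm S₀ σZ S νm νp D V
  have hy' : (0:ℝ) < y := hy
  have hs : 0 < Real.sqrt y := Real.sqrt_pos.2 hy'
  set s := Real.sqrt y with hsdef
  have hsne : s ≠ 0 := ne_of_gt hs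
  have hs2 : s ^ 2 = (a + b) ^ 2 - 4 * c ^ 2 := Real.sq_sqrt hy'.le
  have hsle : s ≤ a + b := by
    have h1 : y ≤ (a + b) ^ 2 := by
      show (a + b) ^ 2 - 4 * c ^ 2 ≤ (a + b) ^ 2
      nlinarith [sq_nonneg c]
    calc s ≤ Real.sqrt ((a + b) ^ 2) := Real.sqrt_le_sqrt h1
      _ = a + b := Real.sqrt_sq hab.le
  have hp2 : ωp ^ 2 = (a + b + s) / (2 * s) := by
    apply Real.sq_sqrt; positivity
  have hm2 : ωm ^ 2 = (a + b - s) / (2 * s) := by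
    apply Real.sq_sqrt
    apply div_nonneg (by linarith) (by positivity)
  have hpm : ωp * ωm = c / s := by
    show Real.sqrt _ * Real.sqrt _ = _
    rw [← Real.sqrt_mul (by positivity), ← hsdef]
    have h2 : (a + b + s) / (2 * s) * ((a + b - s) / (2 * s)) = (c / s) ^ 2 := by
      field_simp
      nlinarith [hs2]
    rw [h2, Real.sqrt_sq (by positivity)]
  have hνm : νm = (s - (b - a)) / 2 := rfl
  have hνp : νp = (s + (b - a)) / 2 := rfl
  -- scalar identities
  have hA : ωp * νm * ωp + ωm * νp * ωm = a := by
    have h : ωp * νm * ωp + ωm * νp * ωm = ωp ^ 2 * νm + ωm ^ 2 * νp := by ring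
    rw [h, hp2, hm2, hνm, hνp]; field_simp; ring
  have hB : ωm * νm * ωm + ωp * νp * ωp = b := by
    have h : ωm * νm * ωm + ωp * νp * ωp = ωm ^ 2 * νm + ωp ^ 2 * νp := by ring
    rw [h, hm2, hp2, hνm, hνp]; field_simp; ring
  have hC : ωp * νm * ωm + ωm * νp * ωp = c := by
    have h : ωp * νm * ωm + ωm * νp * ωp = (ωp * ωm) * (νm + νp) := by ring
    have hsum : νm + νp = s := by rw [hνm, hνp]; ring
    rw [h, hpm, hsum]; field_simp
  have key1 : S₀ * D * S₀ᵀ = !![a, c; c, b] := by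
    show !![ωp, ωm; ωm, ωp] * !![νm, 0; 0, νp] * !![ωp, ωm; ωm, ωp]ᵀ = _
    rw [show !![ωp, ωm; ωm, ωp]ᵀ = !![ωp, ωm; ωm, ωp] by
      ext i j; fin_cases i <;> fin_cases j <;> simp]
    ext i j
    fin_cases i <;> fin_cases j <;>
      simp [Matrix.mul_apply, Fin.sum_univ_succ, Matrix.transpose_apply]
    · linarith [hA]
    · linarith [hC]
    · linarith [hC]
    · linarith [hB]
  have hσ : σZ * S₀ * σZ = !![ωp, -ωm; -ωm, ωp] := by
    show !![1, 0; 0, -1] * !![ωp, ωm; ωm, ωp] * !![1, 0; 0, -1] = _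
    ext i j; fin_cases i <;> fin_cases j <;>
      simp [Matrix.mul_apply, Fin.sum_univ_succ]
  have key2 : (σZ * S₀ * σZ) * D * (σZ * S₀ * σZ)ᵀ = !![a, -c; -c, b] := by
    rw [hσ]
    show !![ωp, -ωm; -ωm, ωp] * !![νm, 0; 0, νp] * !![ωp, -ωm; -ωm, ωp]ᵀ = _
    rw [show !![ωp, -ωm; -ωm, ωp]ᵀ = !![ωp, -ωm; -ωm, ωp] by
      ext i j; fin_cases i <;> fin_cases j <;> simp]
    ext i j
    fin_cases i <;> fin_cases j <;>
      simp [Matrix.mul_apply, Fin.sum_univ_succ, Matrix.transpose_apply]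
    · linarith [hA]
    · linarith [hC]
    · linarith [hC]
    · linarith [hB]
  show Matrix.fromBlocks S₀ 0 0 (σZ * S₀ * σZ) * Matrix.fromBlocks D 0 0 D *
      (Matrix.fromBlocks S₀ 0 0 (σZ * S₀ * σZ))ᵀ = V
  rw [Matrix.fromBlocks_transpose, Matrix.fromBlocks_multiply,
    Matrix.fromBlocks_multiply]
  simp only [Matrix.mul_zero, Matrix.zero_mul, add_zero, zero_add,
    Matrix.transpose_zero]
  rw [key1, key2]
end

section
/- For every real N > 0, the entropy variance of the thermal (geometric) distribution with mean N equals N(N+1) [log₂(1 + 1/N)]²: the series ∑_{n=0}^∞ p_N(n) (−log₂ p_N(n) − g(N))² converges and equals N(N+1) [log₂(1 + 1/N)]². -/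
open Real

/-- The thermal (geometric) distribution on ℕ with mean photon number `N`. -/
noncomputable def thermalDist (N : ℝ) (n : ℕ) : ℝ := (1 / (N + 1)) * (N / (N + 1)) ^ n

/-- `g(N) = (N+1) log₂(N+1) − N log₂ N`, the entropy of the thermal distribution. -/
noncomputable def gFun (N : ℝ) : ℝ := (N + 1) * Real.logb 2 (N + 1) - N * Real.logb 2 N

/-!
The surprisal of the thermal distribution is affine in `n`: `−log₂ p_N(n) = log₂(N+1) + n c`
with `c = log₂(1 + 1/N)`, and `g(N) = log₂(N+1) + N c`. Hence the centred surprisal is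
`(n − N) c`, and the entropy variance is `c²` times the variance `N(N+1)` of the geometric law,
which follows from the negative-binomial series `∑ C(n+k, k) rⁿ = (1 − r)^{−(k+1)}`.
-/

lemma neg_logb_thermalDist_sub_gFun {N : ℝ} (hN : 0 < N) (n : ℕ) :
    -logb 2 (thermalDist N n) - gFun N = ((n : ℝ) - N) * logb 2 (1 + 1 / N) := by
  have hN1 : 0 < N + 1 := by linarith
  rw [show 1 + 1 / N = (N + 1) / N by field_simp, thermalDist, gFun,
    logb_mul (by positivity) (by positivity), logb_pow, one_div, logb_inv,
    logb_div hN.ne' hN1.ne', logb_div hN1.ne' hN.ne']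
  ring

lemma hasSum_choose_mul_thermal_ratio_pow {N : ℝ} (hN : 0 ≤ N) (k : ℕ) :
    HasSum (fun n : ℕ => ((n + k).choose k : ℝ) * (N / (N + 1)) ^ n) ((N + 1) ^ (k + 1)) := by
  have hN1 : 0 < N + 1 := by linarith
  have hr : ‖N / (N + 1)‖ < 1 := by
    rw [norm_of_nonneg (by positivity), div_lt_one hN1]
    linarith
  have h := hasSum_choose_mul_geometric_of_norm_lt_one k hr
  rwa [show 1 - N / (N + 1) = 1 / (N + 1) by field_simp; ring, div_pow, one_pow,
    one_div_one_div] at h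

lemma hasSum_thermalDist_mul_sub_sq {N : ℝ} (hN : 0 ≤ N) :
    HasSum (fun n : ℕ => thermalDist N n * ((n : ℝ) - N) ^ 2) (N * (N + 1)) := by
  have hN1 : 0 < N + 1 := by linarith
  have hsum := (((hasSum_choose_mul_thermal_ratio_pow hN 2).mul_left 2).sub
    ((hasSum_choose_mul_thermal_ratio_pow hN 1).mul_left (2 * N + 3))).add
    ((hasSum_choose_mul_thermal_ratio_pow hN 0).mul_left ((N + 1) ^ 2))
  have hvalue : N * (N + 1) = 1 / (N + 1) *
      (2 * (N + 1) ^ 3 - (2 * N + 3) * (N + 1) ^ 2 + (N + 1) ^ 2 * (N + 1) ^ 1) := by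
    field_simp
    ring
  rw [hvalue]
  refine (hsum.mul_left (1 / (N + 1))).congr_fun fun n => ?_
  -- factorial-moment expansion `(n − N)² = 2 C(n+2, 2) − (2N+3) C(n+1, 1) + (N+1)² C(n, 0)`
  rw [thermalDist, Nat.cast_choose_two, Nat.choose_one_right, Nat.choose_zero_right]
  push_cast
  ring

/-- For `N > 0`, the entropy variance of the thermal distribution with mean `N`,
i.e. the series `∑ₙ p_N(n) (−log₂ p_N(n) − g(N))²`, converges and equals
`N(N+1) [log₂(1 + 1/N)]²`. -/
theorem thermal_entropy_variance (N : ℝ) (hN : 0 < N) :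
    HasSum (fun n : ℕ => thermalDist N n * (-(Real.logb 2 (thermalDist N n)) - gFun N) ^ 2)
      (N * (N + 1) * (Real.logb 2 (1 + 1 / N)) ^ 2) := by
  refine ((hasSum_thermalDist_mul_sub_sq hN.le).mul_right (logb 2 (1 + 1 / N) ^ 2)).congr_fun
    fun n => ?_
  rw [neg_logb_thermalDist_sub_gFun hN n]
  ring
end

section
/- Let η ∈ (0,1) and N > 0. The covariance of n and k under the joint photon-number distribution equals (1−η) N (N+1): ∑_{n=0}^∞ ∑_{k=0}^{n} p(n,k) (n − N)(k − (1−η)N) = (1−η) N (N+1), where the series converges; here N is the mean of n and (1−η)N is the mean of k under p. -/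
/-!
Conditionally on `n`, the variable `k` is binomial with parameters `n` and `1 - η`, so its
conditional mean is `(1 - η) n`. The inner sum therefore collapses to `(1 - η)` times the
`n`-th term of the variance series of the geometric distribution
`n ↦ (1/(N+1)) (N/(N+1))^n` of mean `N`, whose variance is `N (N + 1)`.
-/

open Real

/-- The joint photon-number distribution
`p(n,k) = (1/(N+1)) (N/(N+1))^n C(n,k) (1−η)^k η^{n−k}` (it vanishes for `k > n`,
since then `C(n,k) = 0`). -/
noncomputable def jointDist (η N : ℝ) (n k : ℕ) : ℝ :=
  (1 / (N + 1)) * (N / (N + 1)) ^ n * (n.choose k : ℝ) * (1 - η) ^ k * η ^ (n - k)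

open Finset

theorem sum_range_mul_choose_mul_pow_mul_pow {R : Type*} [CommSemiring R] (x y : R) (n : ℕ) :
    ∑ k ∈ range (n + 1), (k : R) * n.choose k * x ^ k * y ^ (n - k)
      = n * x * (x + y) ^ (n - 1) := by
  cases n with
  | zero => simp
  | succ m =>
    have hterm (j : ℕ) :
        ((j + 1 : ℕ) : R) * (m + 1).choose (j + 1) * x ^ (j + 1) * y ^ (m + 1 - (j + 1))
          = (m + 1 : ℕ) * x * (x ^ j * y ^ (m - j) * m.choose j) := by
      rw [Nat.add_sub_add_right, pow_succ, mul_comm ((j + 1 : ℕ) : R), ← Nat.cast_mul,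
        ← Nat.add_one_mul_choose_eq, Nat.cast_mul]
      ring
    rw [sum_range_succ', Nat.cast_zero, zero_mul, zero_mul, zero_mul, add_zero]
    simp only [hterm, ← mul_sum, ← add_pow, Nat.add_sub_cancel]

theorem sum_range_choose_mul_pow_mul_pow_mul_sub {R : Type*} [CommRing R] {p q : R}
    (hpq : p + q = 1) (c : R) (n : ℕ) :
    ∑ k ∈ range (n + 1), n.choose k * p ^ k * q ^ (n - k) * ((k : R) - c) = n * p - c := by
  have hmass : ∑ k ∈ range (n + 1), (n.choose k : R) * p ^ k * q ^ (n - k) = 1 := by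
    rw [show (1 : R) = (p + q) ^ n by rw [hpq, one_pow], add_pow]
    exact sum_congr rfl fun k _ => by ring
  have hmean := sum_range_mul_choose_mul_pow_mul_pow p q n
  rw [hpq, one_pow, mul_one] at hmean
  simp only [mul_sub, sum_sub_distrib, ← sum_mul, hmass, ← hmean]
  congr 1
  · exact sum_congr rfl fun k _ => by ring
  · ring

theorem hasSum_geometric_mul_sub_sq {N : ℝ} (hN : 0 ≤ N) :
    HasSum (fun n : ℕ => (N / (N + 1)) ^ n * ((n : ℝ) - N) ^ 2) (N * (N + 1) ^ 2) := by
  have hr : ‖N / (N + 1)‖ < 1 := by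
    rw [Real.norm_of_nonneg (by positivity), div_lt_one (by positivity)]
    linarith
  have h1r : 1 - N / (N + 1) = 1 / (N + 1) := by field_simp; ring
  have hs (k : ℕ) := hasSum_choose_mul_geometric_of_norm_lt_one (𝕜 := ℝ) k hr
  simp only [h1r, one_div_pow, one_div_one_div] at hs
  have hsq (n : ℕ) : ((n : ℝ) - N) ^ 2 = 2 * ((n + 2).choose 2 : ℕ)
      - (2 * N + 3) * ((n + 1).choose 1 : ℕ) + (N + 1) ^ 2 * ((n + 0).choose 0 : ℕ) := by
    rw [Nat.cast_choose_two, Nat.choose_one_right, Nat.choose_zero_right]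
    push_cast
    ring
  have H := (((hs 2).mul_left 2).sub ((hs 1).mul_left (2 * N + 3))).add
    ((hs 0).mul_left ((N + 1) ^ 2))
  rw [show N * (N + 1) ^ 2 = 2 * (N + 1) ^ (2 + 1) - (2 * N + 3) * (N + 1) ^ (1 + 1)
      + (N + 1) ^ 2 * (N + 1) ^ (0 + 1) by ring]
  exact H.congr_fun fun n => by rw [hsq]; ring

theorem sum_range_jointDist_mul_sub_mul_sub (η N : ℝ) (n : ℕ) :
    ∑ k ∈ range (n + 1), jointDist η N n k * ((n : ℝ) - N) * ((k : ℝ) - (1 - η) * N)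
      = (1 - η) / (N + 1) * ((N / (N + 1)) ^ n * ((n : ℝ) - N) ^ 2) := by
  calc _ = 1 / (N + 1) * (N / (N + 1)) ^ n * ((n : ℝ) - N) * ∑ k ∈ range (n + 1),
          n.choose k * (1 - η) ^ k * η ^ (n - k) * ((k : ℝ) - (1 - η) * N) := by
        rw [mul_sum]
        exact sum_congr rfl fun k _ => by unfold jointDist; ring
    _ = _ := by
        rw [sum_range_choose_mul_pow_mul_pow_mul_sub (sub_add_cancel 1 η)]
        ring

theorem joint_covariance_general (η N : ℝ) (hN : 0 < N) :
    HasSum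
      (fun n : ℕ => ∑ k ∈ Finset.range (n + 1),
        jointDist η N n k * ((n : ℝ) - N) * ((k : ℝ) - (1 - η) * N))
      ((1 - η) * N * (N + 1)) := by
  have hvar := (hasSum_geometric_mul_sub_sq hN.le).mul_left ((1 - η) / (N + 1))
  rw [show (1 - η) / (N + 1) * (N * (N + 1) ^ 2) = (1 - η) * N * (N + 1) by
    field_simp] at hvar
  exact hvar.congr_fun (sum_range_jointDist_mul_sub_mul_sub η N)

/-- For `η ∈ (0,1)` and `N > 0`, the covariance of `n` and `k` under the joint
photon-number distribution equals `(1−η)N(N+1)`: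
`∑_{n=0}^∞ ∑_{k=0}^{n} p(n,k) (n − N)(k − (1−η)N) = (1−η)N(N+1)`, the series converging. -/
theorem joint_covariance (η N : ℝ) (hη : η ∈ Set.Ioo (0 : ℝ) 1) (hN : 0 < N) :
    HasSum
      (fun n : ℕ => ∑ k ∈ Finset.range (n + 1),
        jointDist η N n k * ((n : ℝ) - N) * ((k : ℝ) - (1 - η) * N))
      ((1 - η) * N * (N + 1)) :=
  joint_covariance_general η N hN
end

section
/- Let η ∈ (0,1) and N > 0, and set L₁ = log₂(1 + 1/((1−η)N)) and L₂ = log₂(1 + 1/N). The variance of the random variable k L₁ − n L₂ under the joint photon-number distribution p equals (1−η)N((1−η)N+1) L₁² − 2(1−η)N(N+1) L₁ L₂ + N(N+1) L₂²; that is, ∑_{n,k} p(n,k)(k L₁ − n L₂)² − (∑_{n,k} p(n,k)(k L₁ − n L₂))² equals the displayed three-term expression, with all series converging. -/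
/-!
The distribution factors as `p(n,k) = t(n) · B(n,k)`, with `t` the thermal (geometric)
distribution of mean `N` and `B(n,·)` the binomial distribution with success probability
`1 - η`. Given `n`, the conditional mean and second moment of `k a - n b` are
`n c` and `n² c² + n η (1 - η) a²` with `c = (1 - η) a - b`, by the Bernstein-polynomial
moment identities. Averaging over `t`, whose first two moments are `N` and `N (2N + 1)`,
gives mean `N c` and variance `N (N + 1) c² + N η (1 - η) a²`, which expands to the
claimed expression for any reals `a = L₁`, `b = L₂`.
-/

open Real

open Finset

theorem hasSum_sq_mul_geometric_of_norm_lt_one {𝕜 : Type*} [NormedField 𝕜]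
    [HasSummableGeomSeries 𝕜] {r : 𝕜} (hr : ‖r‖ < 1) :
    HasSum (fun n : ℕ ↦ (n : 𝕜) ^ 2 * r ^ n) (r * (1 + r) / (1 - r) ^ 3) := by
  have hr1 : 1 - r ≠ 0 := sub_ne_zero.2 fun h ↦ by simp [← h] at hr
  have h := ((hasSum_choose_mul_geometric_of_norm_lt_one 2 hr).mul_left 2).sub
    (((hasSum_coe_mul_geometric_of_norm_lt_one hr).mul_left 3).add
      ((hasSum_geometric_of_norm_lt_one hr).mul_left 2))
  have hterm : (fun n : ℕ ↦ (n : 𝕜) ^ 2 * r ^ n) =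
      fun n : ℕ ↦
        2 * ((((n + 2).choose 2 : ℕ) : 𝕜) * r ^ n) - (3 * (n * r ^ n) + 2 * r ^ n) := by
    ext n
    have hchoose : (n + 2).choose 2 * 2 = (n + 2) * (n + 1) := by
      simpa using (Nat.add_one_mul_choose_eq (n + 1) 1).symm
    have hcast : (((n + 2).choose 2 : ℕ) : 𝕜) * 2 = (n + 2) * (n + 1) := by
      simpa using congrArg (Nat.cast (R := 𝕜)) hchoose
    linear_combination (-r ^ n) * hcast
  have hsum : r * (1 + r) / (1 - r) ^ 3 =
      2 * (1 / (1 - r) ^ (2 + 1)) - (3 * (r / (1 - r) ^ 2) + 2 * (1 - r)⁻¹) := by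
    field_simp
    ring
  rwa [hterm, hsum]

section Binomial

variable {x y : ℝ}

noncomputable def binomialWeight (x y : ℝ) (n k : ℕ) : ℝ :=
  n.choose k * x ^ k * y ^ (n - k)

theorem sum_binomialWeight (hxy : x + y = 1) (n : ℕ) :
    ∑ k ∈ range (n + 1), binomialWeight x y n k = 1 := by
  obtain rfl : y = 1 - x := by linarith
  simpa [Polynomial.eval_finsetSum, bernsteinPolynomial, binomialWeight] using
    congrArg (Polynomial.eval x) (bernsteinPolynomial.sum ℝ n)

theorem sum_coe_mul_binomialWeight (hxy : x + y = 1) (n : ℕ) :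
    ∑ k ∈ range (n + 1), (k : ℝ) * binomialWeight x y n k = n * x := by
  obtain rfl : y = 1 - x := by linarith
  simpa [Polynomial.eval_finsetSum, bernsteinPolynomial, binomialWeight, mul_assoc] using
    congrArg (Polynomial.eval x) (bernsteinPolynomial.sum_smul ℝ n)

theorem sum_sq_sub_mul_binomialWeight (hxy : x + y = 1) (n : ℕ) :
    ∑ k ∈ range (n + 1), (n * x - k) ^ 2 * binomialWeight x y n k = n * x * y := by
  obtain rfl : y = 1 - x := by linarith
  have h := congrArg (Polynomial.eval x) (bernsteinPolynomial.variance ℝ n)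
  simpa [Polynomial.eval_finsetSum, bernsteinPolynomial, binomialWeight, mul_assoc] using h

theorem sum_coe_sq_mul_binomialWeight (hxy : x + y = 1) (n : ℕ) :
    ∑ k ∈ range (n + 1), (k : ℝ) ^ 2 * binomialWeight x y n k
      = n ^ 2 * x ^ 2 + n * x * y := by
  calc ∑ k ∈ range (n + 1), (k : ℝ) ^ 2 * binomialWeight x y n k
      = ∑ k ∈ range (n + 1), ((n * x - k) ^ 2 * binomialWeight x y n k
          + 2 * n * x * (k * binomialWeight x y n k)
          - (n * x) ^ 2 * binomialWeight x y n k) :=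
        sum_congr rfl fun k _ ↦ by ring
    _ = n ^ 2 * x ^ 2 + n * x * y := by
        rw [sum_sub_distrib, sum_add_distrib, ← mul_sum, ← mul_sum,
          sum_sq_sub_mul_binomialWeight hxy, sum_coe_mul_binomialWeight hxy,
          sum_binomialWeight hxy]
        ring

theorem sum_binomialWeight_mul_affine (hxy : x + y = 1) (a b : ℝ) (n : ℕ) :
    ∑ k ∈ range (n + 1), binomialWeight x y n k * (k * a - n * b) = n * (x * a - b) := by
  calc ∑ k ∈ range (n + 1), binomialWeight x y n k * (k * a - n * b)
      = ∑ k ∈ range (n + 1), (a * (k * binomialWeight x y n k)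
          - n * b * binomialWeight x y n k) :=
        sum_congr rfl fun k _ ↦ by ring
    _ = n * (x * a - b) := by
        rw [sum_sub_distrib, ← mul_sum, ← mul_sum, sum_coe_mul_binomialWeight hxy,
          sum_binomialWeight hxy]
        ring

theorem sum_binomialWeight_mul_affine_sq (hxy : x + y = 1) (a b : ℝ) (n : ℕ) :
    ∑ k ∈ range (n + 1), binomialWeight x y n k * (k * a - n * b) ^ 2
      = n ^ 2 * (x * a - b) ^ 2 + n * x * y * a ^ 2 := by
  calc ∑ k ∈ range (n + 1), binomialWeight x y n k * (k * a - n * b) ^ 2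
      = ∑ k ∈ range (n + 1), (a ^ 2 * (k ^ 2 * binomialWeight x y n k)
          - 2 * n * a * b * (k * binomialWeight x y n k)
          + n ^ 2 * b ^ 2 * binomialWeight x y n k) :=
        sum_congr rfl fun k _ ↦ by ring
    _ = n ^ 2 * (x * a - b) ^ 2 + n * x * y * a ^ 2 := by
        rw [sum_add_distrib, sum_sub_distrib, ← mul_sum, ← mul_sum, ← mul_sum,
          sum_coe_sq_mul_binomialWeight hxy, sum_coe_mul_binomialWeight hxy,
          sum_binomialWeight hxy]
        ring

end Binomial

section Thermal

variable {N : ℝ}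

noncomputable def thermalWeight (N : ℝ) (n : ℕ) : ℝ :=
  1 / (N + 1) * (N / (N + 1)) ^ n

theorem norm_div_add_one_lt_one (hN : 0 ≤ N) : ‖N / (N + 1)‖ < 1 := by
  rw [Real.norm_of_nonneg (by positivity), div_lt_one (by positivity)]
  linarith

theorem hasSum_thermalWeight_mul_coe (hN : 0 ≤ N) :
    HasSum (fun n : ℕ ↦ thermalWeight N n * n) N := by
  have h := (hasSum_coe_mul_geometric_of_norm_lt_one (norm_div_add_one_lt_one hN)).mul_left
    (1 / (N + 1))
  have hN1 : N + 1 ≠ 0 := by positivity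
  have h1r : 1 - N / (N + 1) = 1 / (N + 1) := by field_simp; ring
  have hval : 1 / (N + 1) * (N / (N + 1) / (1 / (N + 1)) ^ 2) = N := by
    field_simp
  rw [h1r, hval] at h
  exact h.congr_fun fun n ↦ by simp only [thermalWeight]; ring

theorem hasSum_thermalWeight_mul_coe_sq (hN : 0 ≤ N) :
    HasSum (fun n : ℕ ↦ thermalWeight N n * n ^ 2) (N * (2 * N + 1)) := by
  have h := (hasSum_sq_mul_geometric_of_norm_lt_one (norm_div_add_one_lt_one hN)).mul_left
    (1 / (N + 1))
  have hN1 : N + 1 ≠ 0 := by positivity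
  have h1r : 1 - N / (N + 1) = 1 / (N + 1) := by field_simp; ring
  have hval : 1 / (N + 1) * (N / (N + 1) * (1 + N / (N + 1)) / (1 / (N + 1)) ^ 3)
      = N * (2 * N + 1) := by
    field_simp
    ring
  rw [h1r, hval] at h
  exact h.congr_fun fun n ↦ by simp only [thermalWeight]; ring

end Thermal

section JointDist

variable (η N a b : ℝ) (n : ℕ)

theorem jointDist_eq_thermalWeight_mul_binomialWeight (k : ℕ) :
    jointDist η N n k = thermalWeight N n * binomialWeight (1 - η) η n k := by
  simp only [jointDist, thermalWeight, binomialWeight]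
  ring

theorem sum_jointDist_mul_affine :
    ∑ k ∈ range (n + 1), jointDist η N n k * (k * a - n * b)
      = thermalWeight N n * n * ((1 - η) * a - b) := by
  simp only [jointDist_eq_thermalWeight_mul_binomialWeight, mul_assoc, ← mul_sum]
  rw [sum_binomialWeight_mul_affine (sub_add_cancel 1 η)]

theorem sum_jointDist_mul_affine_sq :
    ∑ k ∈ range (n + 1), jointDist η N n k * (k * a - n * b) ^ 2
      = thermalWeight N n * (n ^ 2 * ((1 - η) * a - b) ^ 2 + n * (1 - η) * η * a ^ 2) := by
  simp only [jointDist_eq_thermalWeight_mul_binomialWeight, mul_assoc, ← mul_sum]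
  rw [sum_binomialWeight_mul_affine_sq (sub_add_cancel 1 η)]
  ring

end JointDist

theorem reverse_coherent_information_variance_general (η N : ℝ) (hN : 0 < N) :
    let L₁ : ℝ := Real.logb 2 (1 + 1 / ((1 - η) * N))
    let L₂ : ℝ := Real.logb 2 (1 + 1 / N)
    let m₁ : ℕ → ℝ := fun n => ∑ k ∈ Finset.range (n + 1),
      jointDist η N n k * ((k : ℝ) * L₁ - (n : ℝ) * L₂)
    let m₂ : ℕ → ℝ := fun n => ∑ k ∈ Finset.range (n + 1),
      jointDist η N n k * ((k : ℝ) * L₁ - (n : ℝ) * L₂) ^ 2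
    Summable m₁ ∧ Summable m₂ ∧
      (∑' n, m₂ n) - (∑' n, m₁ n) ^ 2 =
        (1 - η) * N * ((1 - η) * N + 1) * L₁ ^ 2
          - 2 * (1 - η) * N * (N + 1) * L₁ * L₂
          + N * (N + 1) * L₂ ^ 2 := by
  intro L₁ L₂ m₁ m₂
  set c := (1 - η) * L₁ - L₂
  have hm₁ : HasSum m₁ (N * c) :=
    ((hasSum_thermalWeight_mul_coe hN.le).mul_right c).congr_fun fun n ↦
      sum_jointDist_mul_affine η N L₁ L₂ n
  have hm₂ : HasSum m₂ (N * (2 * N + 1) * c ^ 2 + N * ((1 - η) * η * L₁ ^ 2)) :=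
    (((hasSum_thermalWeight_mul_coe_sq hN.le).mul_right (c ^ 2)).add
      ((hasSum_thermalWeight_mul_coe hN.le).mul_right ((1 - η) * η * L₁ ^ 2))).congr_fun
      fun n ↦ (sum_jointDist_mul_affine_sq η N L₁ L₂ n).trans (by ring)
  refine ⟨hm₁.summable, hm₂.summable, ?_⟩
  rw [hm₁.tsum_eq, hm₂.tsum_eq]
  ring

/-- For `η ∈ (0,1)`, `N > 0`, `L₁ = log₂(1+1/((1−η)N))`, `L₂ = log₂(1+1/N)`,
the variance of `k L₁ − n L₂` under the joint photon-number distribution equals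
`(1−η)N((1−η)N+1) L₁² − 2(1−η)N(N+1) L₁L₂ + N(N+1) L₂²`: the first- and second-moment
series converge, and second moment minus square of first moment equals the displayed
expression. -/
theorem reverse_coherent_information_variance (η N : ℝ) (hη : η ∈ Set.Ioo (0 : ℝ) 1)
    (hN : 0 < N) :
    let L₁ : ℝ := Real.logb 2 (1 + 1 / ((1 - η) * N))
    let L₂ : ℝ := Real.logb 2 (1 + 1 / N)
    let m₁ : ℕ → ℝ := fun n => ∑ k ∈ Finset.range (n + 1),
      jointDist η N n k * ((k : ℝ) * L₁ - (n : ℝ) * L₂)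
    let m₂ : ℕ → ℝ := fun n => ∑ k ∈ Finset.range (n + 1),
      jointDist η N n k * ((k : ℝ) * L₁ - (n : ℝ) * L₂) ^ 2
    Summable m₁ ∧ Summable m₂ ∧
      (∑' n, m₂ n) - (∑' n, m₁ n) ^ 2 =
        (1 - η) * N * ((1 - η) * N + 1) * L₁ ^ 2
          - 2 * (1 - η) * N * (N + 1) * L₁ * L₂
          + N * (N + 1) * L₂ ^ 2 :=
  reverse_coherent_information_variance_general η N hN
end
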